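/- arXiv:2103.06536 — 6 statements merged into one kernel-verified Lean document; each statement's English description precedes it below -/
import Mathlib

section
/- Let n₀ be a positive integer. Assume that every finite simple graph G' with 1 ≤ n(G') ≤ n₀ satisfies: G' does not contain C_4 as a topological minor if and only if G' satisfies the C4-condition. Then every finite simple graph G with n(G) = n₀ that contains no diamond as a subgraph satisfies n(G) − m(G) + c₃(G) ≤ cc(G). -/
open SimpleGraph

/-- The internal vertices of a walk: its support minus the two endpoints. -/
def SimpleGraph.Walk.internalSupport {V : Type*} {G : SimpleGraph V} {u v : V}
    (p : G.Walk u v) : List V :=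
  p.support.tail.dropLast

/-- `G` contains `H` as a topological minor: there is an injective map `φ` on vertices and,
for each edge `{x,y}` of `H`, a path in `G` from `φ x` to `φ y` (one path per edge, encoded
symmetrically on ordered adjacent pairs), such that for any two distinct edges of `H` no
internal vertex of the path of one edge lies on the path of the other edge. -/
def SimpleGraph.IsTopMinor {V W : Type*} (H : SimpleGraph V) (G : SimpleGraph W) : Prop :=
  ∃ (φ : V → W) (σ : ∀ ⦃x y : V⦄, H.Adj x y → G.Walk (φ x) (φ y)),
    Function.Injective φ ∧
    (∀ ⦃x y⦄ (h : H.Adj x y), (σ h).IsPath) ∧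
    (∀ ⦃x y⦄ (h : H.Adj x y), σ h.symm = (σ h).reverse) ∧
    (∀ ⦃x y x' y'⦄ (h : H.Adj x y) (h' : H.Adj x' y'),
      s(x, y) ≠ s(x', y') →
      ∀ w ∈ (σ h).internalSupport, w ∉ (σ h').support)

/-- `G` contains the diamond (`K₄` minus an edge) as a subgraph. -/
def SimpleGraph.HasDiamond {V : Type*} (G : SimpleGraph V) : Prop :=
  ∃ a b c d : V, a ≠ b ∧ a ≠ c ∧ a ≠ d ∧ b ≠ c ∧ b ≠ d ∧ c ≠ d ∧
    G.Adj a b ∧ G.Adj a c ∧ G.Adj b c ∧ G.Adj b d ∧ G.Adj c d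

/-- `m(G)`: the number of edges of `G`. -/
noncomputable def SimpleGraph.numEdges {V : Type*} (G : SimpleGraph V) : ℕ :=
  Nat.card G.edgeSet

/-- `c₃(G)`: the number of triangles of `G` (3-element vertex sets that are pairwise
adjacent). -/
noncomputable def SimpleGraph.numTriangles {V : Type*} (G : SimpleGraph V) : ℕ :=
  Nat.card (G.cliqueSet 3)

/-- `cc(G)`: the number of connected components of `G`. -/
noncomputable def SimpleGraph.numComponents {V : Type*} (G : SimpleGraph V) : ℕ :=
  Nat.card G.ConnectedComponent

/-- The `C₄`-condition: `G` contains no diamond as a subgraph and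
`n(G) - m(G) + c₃(G) = cc(G)`. -/
def C4Condition {V : Type*} [Fintype V] (G : SimpleGraph V) : Prop :=
  ¬ G.HasDiamond ∧
    (Fintype.card V : ℤ) - G.numEdges + G.numTriangles = G.numComponents

/-! Induct on the number of edges. If `G` has no topological `C₄` minor, the hypothesis gives
equality. Otherwise `G` is not a forest (a topological minor of a forest is a forest), so some
edge lies on a cycle. Deleting it keeps `cc`, lowers `m` by one and, because an edge of a
diamond-free graph lies in at most one triangle, lowers `c₃` by at most one; so
`n - m + c₃` does not decrease and the induction hypothesis applies. -/

namespace SimpleGraph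

section TopologicalMinor

variable {V W : Type*} {H : SimpleGraph V} {G : SimpleGraph W}

lemma Walk.mem_internalSupport_of_mem_support {u v w : W} {p : G.Walk u v}
    (hw : w ∈ p.support) (hu : w ≠ u) (hv : w ≠ v) : w ∈ p.internalSupport := by
  rw [← Walk.cons_tail_support, List.mem_cons] at hw
  have hw' : w ∈ p.support.tail := hw.resolve_left hu
  rw [← List.dropLast_append_getLast (List.ne_nil_of_mem hw'), List.mem_append,
    List.getLast_tail, Walk.getLast_support, List.mem_singleton] at hw'
  exact hw'.resolve_right hv

def Walk.mapPaths (φ : V → W) (σ : ∀ ⦃x y : V⦄, H.Adj x y → G.Walk (φ x) (φ y)) :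
    ∀ {x y : V}, H.Walk x y → G.Walk (φ x) (φ y)
  | _, _, .nil => .nil
  | _, _, .cons h r => (σ h).append (r.mapPaths φ σ)

lemma Walk.exists_mem_edges_of_mem_edges_mapPaths (φ : V → W)
    (σ : ∀ ⦃x y : V⦄, H.Adj x y → G.Walk (φ x) (φ y)) {x y : V} {r : H.Walk x y}
    {e : Sym2 W} (he : e ∈ (r.mapPaths φ σ).edges) :
    ∃ a b, ∃ h : H.Adj a b, s(a, b) ∈ r.edges ∧ e ∈ (σ h).edges := by
  induction r with
  | nil => simp [Walk.mapPaths] at he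
  | cons h r ih =>
    rw [Walk.mapPaths, Walk.edges_append, List.mem_append] at he
    rcases he with he | he
    · exact ⟨_, _, h, by simp, he⟩
    · obtain ⟨a, b, h', hr, he'⟩ := ih he
      exact ⟨a, b, h', by simp [hr], he'⟩

theorem IsTopMinor.isAcyclic (hHG : H.IsTopMinor G) (hG : G.IsAcyclic) : H.IsAcyclic := by
  classical
  obtain ⟨φ, σ, hφ, hpath, -, hdisj⟩ := hHG
  rw [isAcyclic_iff_forall_adj_isBridge]
  intro a b hab
  by_contra hbr
  obtain ⟨r, hr⟩ := reachable_deleteEdges_iff_exists_walk.mp (not_not.mp hbr)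
  have hpq : σ hab = (r.mapPaths φ σ).toPath :=
    congrArg Subtype.val ((hG.subsingleton_path _ _).elim ⟨_, hpath hab⟩ _)
  obtain ⟨e, he⟩ := List.exists_mem_of_ne_nil (σ hab).edges
    (Walk.edges_eq_nil.not.mpr (Walk.not_nil_of_ne fun h => hab.ne (hφ h)))
  obtain ⟨x, y, hxy, hxyr, hex⟩ := Walk.exists_mem_edges_of_mem_edges_mapPaths φ σ
    (Walk.edges_toPath_subset_edges _ (hpq ▸ he))
  have hne : s(a, b) ≠ s(x, y) := fun h => hr (h ▸ hxyr)
  have hends : ∀ w ∈ (σ hab).support, w ∈ (σ hxy).support →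
      w ∈ s(φ a, φ b) ∧ w ∈ s(φ x, φ y) := by
    intro w hwab hwxy
    constructor
    · by_contra hw
      simp only [Sym2.mem_iff, not_or] at hw
      exact hdisj hab hxy hne w (Walk.mem_internalSupport_of_mem_support hwab hw.1 hw.2) hwxy
    · by_contra hw
      simp only [Sym2.mem_iff, not_or] at hw
      exact hdisj hxy hab hne.symm w (Walk.mem_internalSupport_of_mem_support hwxy hw.1 hw.2) hwab
  induction e using Sym2.ind with | _ w₁ w₂ => ?_
  have hw : w₁ ≠ w₂ := G.ne_of_adj ((σ hab).adj_of_mem_edges he)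
  have h₁ := hends w₁ ((σ hab).fst_mem_support_of_mem_edges he)
    ((σ hxy).fst_mem_support_of_mem_edges hex)
  have h₂ := hends w₂ ((σ hab).snd_mem_support_of_mem_edges he)
    ((σ hxy).snd_mem_support_of_mem_edges hex)
  refine hne (Sym2.map.injective hφ ?_)
  simp only [Sym2.map_mk]
  rw [(Sym2.mem_and_mem_iff hw).mp ⟨h₁.1, h₂.1⟩,
    (Sym2.mem_and_mem_iff hw).mp ⟨h₁.2, h₂.2⟩]

end TopologicalMinor

section DeleteEdge

variable {V : Type*} {G : SimpleGraph V} {u v : V}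

lemma HasDiamond.mono {G' : SimpleGraph V} (hle : G ≤ G') (h : G.HasDiamond) : G'.HasDiamond := by
  obtain ⟨a, b, c, d, hab, hac, had, hbc, hbd, hcd, h₁, h₂, h₃, h₄, h₅⟩ := h
  exact ⟨a, b, c, d, hab, hac, had, hbc, hbd, hcd,
    hle h₁, hle h₂, hle h₃, hle h₄, hle h₅⟩

lemma numEdges_deleteEdges_add_one [Finite V] (h : G.Adj u v) :
    (G.deleteEdges {s(u, v)}).numEdges + 1 = G.numEdges := by
  simp only [numEdges, Nat.card_coe_set_eq, edgeSet_deleteEdges]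
  exact Set.ncard_sdiff_singleton_add_one h (Set.toFinite _)

lemma numComponents_deleteEdges_le [Finite V] (h : ¬ G.IsBridge s(u, v)) :
    (G.deleteEdges {s(u, v)}).numComponents ≤ G.numComponents := by
  have hreach : G.Reachable ≤ (G.deleteEdges {s(u, v)}).Reachable := by
    rw [reachable_eq_reflTransGen]
    refine Relation.reflTransGen_le_of_equivalence_of_le (reachable_is_equivalence _) ?_
    intro x y hxy
    by_cases he : s(x, y) = s(u, v)
    · rcases Sym2.eq_iff.mp he with ⟨rfl, rfl⟩ | ⟨rfl, rfl⟩
      · exact not_not.mp h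
      · exact (not_not.mp h).symm
    · exact (deleteEdges_adj.mpr ⟨hxy, he⟩).reachable
  refine Nat.card_le_card_of_injective (ConnectedComponent.map (Hom.ofLE (deleteEdges_le _))) ?_
  refine ConnectedComponent.ind₂ fun x y hxy => ?_
  simp only [ConnectedComponent.map_mk, Hom.coe_ofLE, id_eq, ConnectedComponent.eq] at hxy ⊢
  exact hreach _ _ hxy

lemma subsingleton_commonNeighbors_of_not_hasDiamond (hG : ¬ G.HasDiamond) (h : G.Adj u v) :
    (G.commonNeighbors u v).Subsingleton := by
  intro a ha d hd
  rw [mem_commonNeighbors] at ha hd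
  by_contra had
  exact hG ⟨a, u, v, d, ha.1.ne.symm, ha.2.ne.symm, had, h.ne, hd.1.ne, hd.2.ne,
    ha.1.symm, ha.2.symm, h, hd.1, hd.2⟩

lemma exists_mem_commonNeighbors_of_mem_cliqueSet_diff [DecidableEq V] {t : Finset V}
    (ht : t ∈ G.cliqueSet 3 \ (G.deleteEdges {s(u, v)}).cliqueSet 3) :
    ∃ a ∈ G.commonNeighbors u v, t = {u, v, a} := by
  obtain ⟨ht, ht'⟩ := ht
  obtain ⟨a, b, c, hab, hac, hbc, rfl⟩ := is3Clique_iff.mp ht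
  simp only [mem_cliqueSet_iff, is3Clique_triple_iff, deleteEdges_adj, Set.mem_singleton_iff,
    mem_commonNeighbors] at ht' ⊢
  grind [Sym2.eq_iff, Finset.insert_comm, Finset.pair_comm, Adj.symm]

lemma numTriangles_le_numTriangles_deleteEdges_add_one [Finite V] (hG : ¬ G.HasDiamond)
    (h : G.Adj u v) : G.numTriangles ≤ (G.deleteEdges {s(u, v)}).numTriangles + 1 := by
  classical
  set G' := G.deleteEdges {s(u, v)}
  have hlost : (G.cliqueSet 3 \ G'.cliqueSet 3).ncard ≤ 1 := by
    have hsub : G.cliqueSet 3 \ G'.cliqueSet 3 ⊆ (fun a => {u, v, a}) '' G.commonNeighbors u v :=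
      fun t ht => by
        obtain ⟨a, ha, rfl⟩ := exists_mem_commonNeighbors_of_mem_cliqueSet_diff ht
        exact ⟨a, ha, rfl⟩
    calc (G.cliqueSet 3 \ G'.cliqueSet 3).ncard
        ≤ ((fun a => {u, v, a}) '' G.commonNeighbors u v).ncard := Set.ncard_le_ncard hsub
      _ ≤ (G.commonNeighbors u v).ncard := Set.ncard_image_le (Set.toFinite _)
      _ ≤ 1 :=
        (Set.ncard_le_one (Set.toFinite _)).mpr
          (subsingleton_commonNeighbors_of_not_hasDiamond hG h)
  calc G.numTriangles
      ≤ (G'.cliqueSet 3).ncard + (G.cliqueSet 3 \ G'.cliqueSet 3).ncard := by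
        rw [numTriangles, Nat.card_coe_set_eq, add_comm]
        exact Set.ncard_le_ncard_sdiff_add_ncard _ _
    _ ≤ G'.numTriangles + 1 := by rw [numTriangles, Nat.card_coe_set_eq]; omega

end DeleteEdge

theorem card_sub_numEdges_add_numTriangles_le_numComponents {V : Type*} [Fintype V]
    (hbase : ∀ G : SimpleGraph V, ¬ (cycleGraph 4).IsTopMinor G → ¬ G.HasDiamond →
      (Fintype.card V : ℤ) - G.numEdges + G.numTriangles = G.numComponents)
    (G : SimpleGraph V) (hG : ¬ G.HasDiamond) :
    (Fintype.card V : ℤ) - G.numEdges + G.numTriangles ≤ G.numComponents := by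
  induction hm : G.numEdges using Nat.strong_induction_on generalizing G with
  | _ m ih =>
    subst hm
    by_cases htop : (cycleGraph 4).IsTopMinor G
    · obtain ⟨u, v, huv, hbridge⟩ : ∃ u v, G.Adj u v ∧ ¬ G.IsBridge s(u, v) := by
        have hcyc : ¬ G.IsAcyclic := fun hG' =>
          isAcyclic_iff_free_cycleGraph.mp (htop.isAcyclic hG') 4 (by norm_num) .rfl
        simpa [isAcyclic_iff_forall_adj_isBridge] using hcyc
      have hm := numEdges_deleteEdges_add_one huv
      have ht := numTriangles_le_numTriangles_deleteEdges_add_one hG huv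
      have hc := numComponents_deleteEdges_le hbridge
      have ih' := ih _ (by omega) (G.deleteEdges {s(u, v)})
        (fun h => hG (h.mono (deleteEdges_le _))) rfl
      omega
    · exact (hbase G htop hG).le

end SimpleGraph

/-- If, for every finite simple graph `G'` with `1 ≤ n(G') ≤ n₀`, excluding `C₄` as a
topological minor is equivalent to the `C₄`-condition, then every diamond-free finite simple
graph `G` with `n(G) = n₀` satisfies `n(G) - m(G) + c₃(G) ≤ cc(G)`. -/
theorem statement_6 (n₀ : ℕ) (hn₀ : 1 ≤ n₀)
    (hyp : ∀ (V' : Type) [Fintype V'] (G' : SimpleGraph V'),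
      1 ≤ Fintype.card V' → Fintype.card V' ≤ n₀ →
      (¬ (SimpleGraph.cycleGraph 4).IsTopMinor G' ↔ C4Condition G'))
    {V : Type} [Fintype V] (G : SimpleGraph V)
    (hn : Fintype.card V = n₀) (hdiam : ¬ G.HasDiamond) :
    (Fintype.card V : ℤ) - G.numEdges + G.numTriangles ≤ G.numComponents :=
  card_sub_numEdges_add_numTriangles_le_numComponents
    (fun G' htop _ => ((hyp V G' (hn ▸ hn₀) hn.le).mp htop).2) G hdiam
end

section
/- Every finite simple graph G that contains no diamond as a subgraph satisfies n(G) − m(G) + c₃(G) ≤ cc(G). -/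
open SimpleGraph

/-!
Deleting an edge `uv` lowers `m` by one. If `uv` lies in a triangle `uvw`, diamond-freeness
makes it the only triangle through `uv`, so `c₃` drops by exactly one while `u` and `v` stay
connected through `w`; otherwise `c₃` is unchanged and `cc` grows by at most one. Hence
`n - m + c₃ - cc` never decreases under edge deletion, and it vanishes on the edgeless graph.
-/

lemma Finset.exists_eq_triple_of_card_eq_three {α : Type*} [DecidableEq α] {s : Finset α}
    {x y : α} (hs : s.card = 3) (hx : x ∈ s) (hy : y ∈ s) (hxy : x ≠ y) :
    ∃ z ∉ ({x, y} : Finset α), s = {x, y, z} := by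
  obtain ⟨z, hz, hzxy⟩ := Finset.exists_mem_notMem_of_card_lt_card
    (hs ▸ Finset.card_le_two.trans_lt (by norm_num) : ({x, y} : Finset α).card < s.card)
  refine ⟨z, hzxy, (Finset.eq_of_subset_of_card_le ?_ ?_).symm⟩
  · simp [Finset.insert_subset_iff, hx, hy, hz]
  · simp only [Finset.mem_insert, Finset.mem_singleton, not_or] at hzxy
    rw [hs]
    exact (Finset.card_eq_three.mpr ⟨x, y, z, hxy, Ne.symm hzxy.1, Ne.symm hzxy.2, rfl⟩).ge

namespace SimpleGraph

variable {V : Type*} {G : SimpleGraph V} {u v w x y : V}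

lemma Reachable.deleteEdges_singleton_cases (h : G.Reachable x y) :
    (G.deleteEdges {s(u, v)}).Reachable x y ∨
      (G.deleteEdges {s(u, v)}).Reachable x u ∧ (G.deleteEdges {s(u, v)}).Reachable v y ∨
      (G.deleteEdges {s(u, v)}).Reachable x v ∧ (G.deleteEdges {s(u, v)}).Reachable u y := by
  obtain ⟨p⟩ := h
  induction p with
  | nil => exact .inl .rfl
  | @cons a b c hab p ih =>
    by_cases he : s(a, b) = s(u, v)
    · rcases Sym2.eq_iff.mp he with ⟨rfl, rfl⟩ | ⟨rfl, rfl⟩ <;>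
        rcases ih with h | ⟨h₁, h₂⟩ | ⟨h₁, h₂⟩
      · exact .inr (.inl ⟨.rfl, h⟩)
      · exact .inl (h₁.symm.trans h₂)
      · exact .inl h₂
      · exact .inr (.inr ⟨.rfl, h⟩)
      · exact .inl h₂
      · exact .inl (h₁.symm.trans h₂)
    · have hab' : (G.deleteEdges {s(u, v)}).Adj a b := deleteEdges_adj.mpr ⟨hab, he⟩
      rcases ih with h | ⟨h₁, h₂⟩ | ⟨h₁, h₂⟩
      · exact .inl (hab'.reachable.trans h)
      · exact .inr (.inl ⟨hab'.reachable.trans h₁, h₂⟩)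
      · exact .inr (.inr ⟨hab'.reachable.trans h₁, h₂⟩)

lemma card_connectedComponent_deleteEdges_singleton_le [Finite V] (u v : V) :
    Nat.card (G.deleteEdges {s(u, v)}).ConnectedComponent ≤
      Nat.card G.ConnectedComponent + 1 := by
  classical
  set G' := G.deleteEdges {s(u, v)}
  let f (c : G'.ConnectedComponent) : Option G.ConnectedComponent :=
    if c = G'.connectedComponentMk u then none else some (c.map (.ofLE (deleteEdges_le _)))
  have hf : f.Injective := by
    refine ConnectedComponent.ind₂ fun x y hxy => ?_
    by_cases hx : G'.connectedComponentMk x = G'.connectedComponentMk u <;>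
      by_cases hy : G'.connectedComponentMk y = G'.connectedComponentMk u <;>
      simp only [f, hx, hy, if_true, if_false, reduceCtorEq, Option.some_inj] at hxy
    · rw [hx, hy]
    · rcases (ConnectedComponent.exact hxy).deleteEdges_singleton_cases (u := u) (v := v) with
        h | ⟨h, -⟩ | ⟨-, h⟩
      · exact ConnectedComponent.sound h
      · exact absurd (ConnectedComponent.sound h) hx
      · exact absurd (ConnectedComponent.sound h.symm) hy
  simpa [Finite.card_option] using Nat.card_le_card_of_injective f hf

lemma card_connectedComponent_deleteEdges_singleton_of_reachable [Finite V]
    (h : (G.deleteEdges {s(u, v)}).Reachable u v) :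
    Nat.card (G.deleteEdges {s(u, v)}).ConnectedComponent = Nat.card G.ConnectedComponent := by
  refine le_antisymm ?_ (ConnectedComponent.card_le_card_of_le (deleteEdges_le _))
  refine Nat.card_le_card_of_injective (ConnectedComponent.map (.ofLE (deleteEdges_le _))) ?_
  refine ConnectedComponent.ind₂ fun x y hxy => ?_
  rcases (ConnectedComponent.exact hxy).deleteEdges_singleton_cases (u := u) (v := v) with
    h' | ⟨h₁, h₂⟩ | ⟨h₁, h₂⟩
  · exact ConnectedComponent.sound h'
  · exact ConnectedComponent.sound (h₁.trans (h.trans h₂))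
  · exact ConnectedComponent.sound (h₁.trans (h.symm.trans h₂))

lemma cliqueSet_deleteEdges_singleton (huv : u ≠ v) (n : ℕ) :
    (G.deleteEdges {s(u, v)}).cliqueSet n = G.cliqueSet n \ {s | u ∈ s ∧ v ∈ s} := by
  ext s
  simp only [Set.mem_sdiff, mem_cliqueSet_iff, isNClique_iff, Set.mem_ofPred_eq]
  constructor
  · rintro ⟨hs, hcard⟩
    refine ⟨⟨hs.mono (deleteEdges_le _), hcard⟩, fun ⟨hu, hv⟩ => ?_⟩
    exact (deleteEdges_adj.mp (hs hu hv huv)).2 rfl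
  · rintro ⟨⟨hs, hcard⟩, huv_mem⟩
    refine ⟨fun x hx y hy hxy => deleteEdges_adj.mpr ⟨hs hx hy hxy, fun he => huv_mem ?_⟩,
      hcard⟩
    rcases Sym2.eq_iff.mp he with ⟨rfl, rfl⟩ | ⟨rfl, rfl⟩
    exacts [⟨hx, hy⟩, ⟨hy, hx⟩]

lemma IsNClique.exists_eq_triple [DecidableEq V] {s : Finset V} (hs : G.IsNClique 3 s)
    (hu : u ∈ s) (hv : v ∈ s) (huv : u ≠ v) :
    ∃ w, s = {u, v, w} ∧ G.Adj u v ∧ G.Adj u w ∧ G.Adj v w := by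
  obtain ⟨w, -, rfl⟩ := Finset.exists_eq_triple_of_card_eq_three hs.card_eq hu hv huv
  exact ⟨w, rfl, is3Clique_triple_iff.mp hs⟩

lemma edgeDisjointTriangles_of_not_hasDiamond (hG : ¬G.HasDiamond) :
    G.EdgeDisjointTriangles := by
  classical
  intro s hs t ht hst x ⟨hxs, hxt⟩ y ⟨hys, hyt⟩
  by_contra hxy
  obtain ⟨c, rfl, hxy, hxc, hyc⟩ := hs.exists_eq_triple hxs hys hxy
  obtain ⟨d, rfl, -, hxd, hyd⟩ := ht.exists_eq_triple hxt hyt hxy.ne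
  have hcd : c ≠ d := by rintro rfl; exact hst rfl
  exact hG ⟨c, x, y, d, hxc.ne.symm, hyc.ne.symm, hcd, hxy.ne, hxd.ne, hyd.ne,
    hxc.symm, hyc.symm, hxy, hxd, hyd⟩

lemma cliqueSet_deleteEdges_singleton_of_commonNeighbors_eq_empty [DecidableEq V]
    (huv : G.Adj u v) (hw : G.commonNeighbors u v = ∅) :
    (G.deleteEdges {s(u, v)}).cliqueSet 3 = G.cliqueSet 3 := by
  rw [cliqueSet_deleteEdges_singleton huv.ne, sdiff_eq_left, Set.disjoint_left]
  rintro s hs ⟨hu, hv⟩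
  obtain ⟨w, -, -, huw, hvw⟩ := (mem_cliqueSet_iff.mp hs).exists_eq_triple hu hv huv.ne
  exact hw.subset (G.mem_commonNeighbors.mpr ⟨huw, hvw⟩)

lemma EdgeDisjointTriangles.cliqueSet_deleteEdges_singleton [DecidableEq V]
    (hG : G.EdgeDisjointTriangles) (huv : G.Adj u v) (huw : G.Adj u w) (hvw : G.Adj v w) :
    (G.deleteEdges {s(u, v)}).cliqueSet 3 = G.cliqueSet 3 \ {{u, v, w}} := by
  have huvw : ({u, v, w} : Finset V) ∈ G.cliqueSet 3 :=
    is3Clique_triple_iff.mpr ⟨huv, huw, hvw⟩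
  rw [SimpleGraph.cliqueSet_deleteEdges_singleton huv.ne]
  ext s
  simp only [Set.mem_sdiff, Set.mem_ofPred_eq, Set.mem_singleton_iff, and_congr_right_iff]
  refine fun hs => not_congr ⟨fun ⟨hu, hv⟩ => hG.eq hs huvw fun h => huv.ne (h ?_ ?_), ?_⟩
  · simp [hu]
  · simp [hv]
  · rintro rfl
    simp

lemma numEdges_deleteEdges_singleton_add_one [Finite V] {e : Sym2 V} (he : e ∈ G.edgeSet) :
    (G.deleteEdges {e}).numEdges + 1 = G.numEdges := by
  simp only [numEdges, Nat.card_coe_set_eq, edgeSet_deleteEdges]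
  exact Set.ncard_sdiff_singleton_add_one he

/-- The Euler characteristic of the clique complex of `G` truncated at dimension two. -/
noncomputable def triangleEulerChar (G : SimpleGraph V) : ℤ :=
  Nat.card V - G.numEdges + G.numTriangles

lemma triangleEulerChar_bot [Finite V] :
    (⊥ : SimpleGraph V).triangleEulerChar = (⊥ : SimpleGraph V).numComponents := by
  have hcc : (⊥ : SimpleGraph V).numComponents = Nat.card V :=
    (Nat.card_eq_of_bijective _ ⟨fun _ _ h => reachable_bot.mp (ConnectedComponent.exact h),
      fun c => c.ind fun w => ⟨w, rfl⟩⟩).symm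
  have hm : (⊥ : SimpleGraph V).numEdges = 0 := by simp [numEdges]
  have ht : (⊥ : SimpleGraph V).numTriangles = 0 := by
    simp [numTriangles, (cliqueFree_bot (by norm_num : 2 ≤ 3)).cliqueSet]
  simp [triangleEulerChar, hcc, hm, ht]

lemma EdgeDisjointTriangles.triangleEulerChar_sub_numComponents_le [Finite V]
    (hG : G.EdgeDisjointTriangles) (huv : G.Adj u v) :
    G.triangleEulerChar - G.numComponents ≤
      (G.deleteEdges {s(u, v)}).triangleEulerChar - (G.deleteEdges {s(u, v)}).numComponents := by
  classical
  have hm := numEdges_deleteEdges_singleton_add_one (G.mem_edgeSet.mpr huv)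
  rcases (G.commonNeighbors u v).eq_empty_or_nonempty with hw | ⟨w, hw⟩
  · have ht : (G.deleteEdges {s(u, v)}).numTriangles = G.numTriangles := by
      rw [numTriangles, numTriangles,
        cliqueSet_deleteEdges_singleton_of_commonNeighbors_eq_empty huv hw]
    have hcc := card_connectedComponent_deleteEdges_singleton_le (G := G) u v
    simp only [triangleEulerChar, numComponents] at hcc ⊢
    omega
  · obtain ⟨huw, hvw⟩ := G.mem_commonNeighbors.mp hw
    have ht : (G.deleteEdges {s(u, v)}).numTriangles + 1 = G.numTriangles := by
      rw [numTriangles, numTriangles, hG.cliqueSet_deleteEdges_singleton huv huw hvw,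
        Nat.card_coe_set_eq, Nat.card_coe_set_eq]
      exact Set.ncard_sdiff_singleton_add_one (is3Clique_triple_iff.mpr ⟨huv, huw, hvw⟩)
    have hreach : (G.deleteEdges {s(u, v)}).Reachable u v :=
      (deleteEdges_adj.mpr ⟨huw, by simp [hvw.ne', huv.ne]⟩).reachable.trans
        (deleteEdges_adj.mpr ⟨hvw.symm, by simp [huw.ne', huv.ne']⟩).reachable
    have hcc := card_connectedComponent_deleteEdges_singleton_of_reachable hreach
    simp only [triangleEulerChar, numComponents] at hcc ⊢
    omega

theorem EdgeDisjointTriangles.triangleEulerChar_le_numComponents [Finite V]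
    (hG : G.EdgeDisjointTriangles) : G.triangleEulerChar ≤ G.numComponents := by
  induction G using WellFoundedLT.induction with
  | _ G ih =>
  rcases eq_or_ne G ⊥ with rfl | hne
  · exact triangleEulerChar_bot.le
  obtain ⟨u, v, huv⟩ := ne_bot_iff_exists_adj.mp hne
  have hlt : G.deleteEdges {s(u, v)} < G :=
    (deleteEdges_le _).lt_of_ne (by simpa [deleteEdges_eq_self] using huv)
  have := ih _ hlt (hG.mono hlt.le)
  have := hG.triangleEulerChar_sub_numComponents_le huv
  omega

end SimpleGraph

/-- Every diamond-free finite simple graph satisfies `n(G) - m(G) + c₃(G) ≤ cc(G)`. -/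
theorem statement_7 {V : Type} [Fintype V] (G : SimpleGraph V) (hdiam : ¬ G.HasDiamond) :
    (Fintype.card V : ℤ) - G.numEdges + G.numTriangles ≤ G.numComponents := by
  rw [← Nat.card_eq_fintype_card]
  exact (edgeDisjointTriangles_of_not_hasDiamond hdiam).triangleEulerChar_le_numComponents
end

section
/- Every nonempty finite simple graph G that contains no diamond as a subgraph and satisfies n(G) − m(G) + c₃(G) = cc(G) has a vertex of degree at most two. -/
open SimpleGraph

/-!
In a diamond-free graph two triangles share at most one vertex, so the triangles through a
vertex `v` leave disjoint pairs of neighbours of `v`; hence `v` lies in at most `deg v / 2`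
triangles, and double counting gives `3 c₃ ≤ m`. If every degree were at least three, then
`3 n ≤ 2 m`, so `m - c₃ ≥ 2 m / 3 ≥ n` and `n - m + c₃ ≤ 0 < cc`.
-/

open Finset

namespace SimpleGraph

variable {V : Type*} {G : SimpleGraph V}

theorem eq_of_isNClique_three_of_mem_of_mem [DecidableEq V] (hG : ¬G.HasDiamond)
    {s t : Finset V} (hs : G.IsNClique 3 s) (ht : G.IsNClique 3 t) {u w : V} (huw : u ≠ w)
    (hus : u ∈ s) (hws : w ∈ s) (hut : u ∈ t) (hwt : w ∈ t) : s = t := by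
  by_contra hne
  have hcard : #s = #t := by rw [hs.card_eq, ht.card_eq]
  obtain ⟨a, has, hat⟩ : ∃ a ∈ s, a ∉ t :=
    not_subset.1 fun hst ↦ hne (eq_of_subset_of_card_le hst hcard.ge)
  obtain ⟨b, hbt, hbs⟩ : ∃ b ∈ t, b ∉ s :=
    not_subset.1 fun hts ↦ hne (eq_of_subset_of_card_le hts hcard.le).symm
  have hau : a ≠ u := by rintro rfl; exact hat hut
  have haw : a ≠ w := by rintro rfl; exact hat hwt
  have hub : u ≠ b := by rintro rfl; exact hbs hus
  have hwb : w ≠ b := by rintro rfl; exact hbs hws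
  have hab : a ≠ b := by rintro rfl; exact hat hbt
  exact hG ⟨a, u, w, b, hau, haw, hab, huw, hub, hwb, hs.1 has hus hau, hs.1 has hws haw,
    hs.1 hus hws huw, ht.1 hut hbt hub, ht.1 hwt hbt hwb⟩

variable [Fintype V] [DecidableRel G.Adj]

theorem three_mul_card_le_two_mul_card_edgeFinset (h : ∀ v, 3 ≤ G.degree v) :
    3 * Fintype.card V ≤ 2 * #G.edgeFinset := by
  rw [← sum_degrees_eq_twice_card_edges, mul_comm, ← smul_eq_mul, ← card_univ, ← sum_const]
  exact sum_le_sum fun v _ ↦ h v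

variable [DecidableEq V]

theorem two_mul_card_cliqueFinset_three_mem_le_degree (hG : ¬G.HasDiamond) (v : V) :
    2 * #{s ∈ G.cliqueFinset 3 | v ∈ s} ≤ G.degree v := by
  set T := {s ∈ G.cliqueFinset 3 | v ∈ s}
  have hT : ∀ s ∈ T, G.IsNClique 3 s ∧ v ∈ s := fun s hs ↦ by
    simpa only [T, mem_filter, mem_cliqueFinset_iff] using hs
  have hdisj : (T : Set (Finset V)).PairwiseDisjoint (·.erase v) := by
    intro s hs s' hs' hne
    refine Finset.disjoint_left.2 fun w hw hw' ↦ hne ?_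
    obtain ⟨hwv, hws⟩ := mem_erase.1 hw
    obtain ⟨-, hws'⟩ := mem_erase.1 hw'
    exact eq_of_isNClique_three_of_mem_of_mem hG (hT s hs).1 (hT s' hs').1 hwv.symm
      (hT s hs).2 hws (hT s' hs').2 hws'
  have hsub : T.biUnion (·.erase v) ⊆ G.neighborFinset v := by
    intro w hw
    obtain ⟨s, hs, hw⟩ := mem_biUnion.1 hw
    obtain ⟨hwv, hws⟩ := mem_erase.1 hw
    exact (mem_neighborFinset _ _ _).2 ((hT s hs).1.1 (hT s hs).2 hws hwv.symm)
  calc 2 * #T = ∑ s ∈ T, #(s.erase v) := by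
        rw [mul_comm, ← smul_eq_mul, ← sum_const]
        refine sum_congr rfl fun s hs ↦ ?_
        rw [card_erase_of_mem (hT s hs).2, (hT s hs).1.card_eq]
    _ = #(T.biUnion (·.erase v)) := (card_biUnion hdisj).symm
    _ ≤ G.degree v := card_neighborFinset_eq_degree G v ▸ card_le_card hsub

theorem three_mul_card_cliqueFinset_three_le_card_edgeFinset (hG : ¬G.HasDiamond) :
    3 * #(G.cliqueFinset 3) ≤ #G.edgeFinset := by
  have hcount : 3 * #(G.cliqueFinset 3) = ∑ v, #{s ∈ G.cliqueFinset 3 | v ∈ s} := by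
    calc 3 * #(G.cliqueFinset 3) = ∑ s ∈ G.cliqueFinset 3, #{v | v ∈ s} := by
          rw [mul_comm, ← smul_eq_mul, ← sum_const]
          refine sum_congr rfl fun s hs ↦ ?_
          rw [filter_mem_eq_inter, univ_inter, (mem_cliqueFinset_iff.1 hs).card_eq]
      _ = ∑ v, #{s ∈ G.cliqueFinset 3 | v ∈ s} :=
          sum_card_bipartiteAbove_eq_sum_card_bipartiteBelow (fun s v ↦ v ∈ s)
  have h := sum_le_sum fun v (_ : v ∈ univ) ↦ two_mul_card_cliqueFinset_three_mem_le_degree hG v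
  rw [← mul_sum, ← hcount, sum_degrees_eq_twice_card_edges] at h
  omega

end SimpleGraph

/-- Every nonempty diamond-free finite simple graph with `n(G) - m(G) + c₃(G) = cc(G)` has a
vertex of degree at most two. -/
theorem statement_10 {V : Type} [Fintype V] [Nonempty V] (G : SimpleGraph V)
    (hdiam : ¬ G.HasDiamond)
    (heq : (Fintype.card V : ℤ) - G.numEdges + G.numTriangles = G.numComponents) :
    ∃ v : V, Nat.card (G.neighborSet v) ≤ 2 := by
  classical
  by_contra! hdeg
  have hmin : ∀ v, 3 ≤ G.degree v := fun v ↦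
    (by simpa only [Nat.card_eq_fintype_card, card_neighborSet_eq_degree] using hdeg v :
      2 < G.degree v)
  have hm : G.numEdges = #G.edgeFinset := by
    rw [numEdges, Nat.card_eq_fintype_card, edgeFinset_card]
  have ht : G.numTriangles = #(G.cliqueFinset 3) := by
    rw [numTriangles, ← coe_cliqueFinset, coe_sort_coe, Nat.card_eq_finsetCard]
  have : Nonempty G.ConnectedComponent := ⟨G.connectedComponentMk (Classical.arbitrary V)⟩
  have hcc : 0 < G.numComponents := Nat.card_pos
  have h₁ := three_mul_card_le_two_mul_card_edgeFinset hmin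
  have h₂ := three_mul_card_cliqueFinset_three_le_card_edgeFinset hdiam
  rw [hm, ht] at heq
  omega
end

section
/- For every finite simple graph G, G does not contain the paw as a topological minor if and only if every connected component of G is either a cycle or a tree. -/
open SimpleGraph

/-- The paw: a triangle `{0,1,2}` together with a pendant vertex `3` adjacent to `2`. -/
def pawGraph : SimpleGraph (Fin 4) :=
  SimpleGraph.fromRel (fun i j =>
    (i = 0 ∧ j = 1) ∨ (i = 0 ∧ j = 2) ∨ (i = 1 ∧ j = 2) ∨ (i = 2 ∧ j = 3))

/-- A graph is a cycle if it is connected and `2`-regular. -/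
def SimpleGraph.IsCycleGraph {V : Type*} (G : SimpleGraph V) : Prop :=
  G.Connected ∧ ∀ v, Nat.card (G.neighborSet v) = 2

/-!
In a graph whose components are cycles and trees there is no paw model: the paw vertex of degree
three needs three distinct neighbours of its image (impossible in a `2`-regular component), and the
triangle yields two distinct paths between the images of two of its vertices inside one component
(impossible in a tree). Conversely, take a shortest cycle in a component that is neither a cycle
nor a tree. An edge leaving the cycle gives a paw: the cycle is the subdivided triangle and the edge
the pendant edge. Otherwise the cycle passes through every vertex by connectedness, and as a chord
would close a shorter cycle, every vertex has exactly its two cycle neighbours.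
-/

namespace SimpleGraph

variable {V W : Type*}

namespace Walk

variable {G : SimpleGraph V}

lemma mem_internalSupport_iff {u v w : V} {p : G.Walk u v} (hp : p.IsPath) :
    w ∈ p.internalSupport ↔ w ∈ p.support ∧ w ≠ u ∧ w ≠ v := by
  rcases p with _ | ⟨h, q⟩
  · simp [internalSupport]
  · have hnd := hp.support_nodup
    simp only [internalSupport, support_cons, List.tail_cons] at hnd ⊢
    rw [← q.dropLast_support_concat] at hnd ⊢
    simp only [List.nodup_cons, List.nodup_append, List.mem_append, List.mem_singleton] at hnd
    simp only [List.dropLast_concat, List.mem_cons, List.mem_append]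
    grind

lemma mem_internalSupport_reverse {u v w : V} {p : G.Walk u v} :
    w ∈ p.reverse.internalSupport ↔ w ∈ p.internalSupport := by
  rw [internalSupport, internalSupport, support_reverse, List.tail_reverse, List.dropLast_reverse,
    List.tail_dropLast, List.mem_reverse]

lemma internalSupport_map {G' : SimpleGraph W} (f : G →g G') {u v : V} (p : G.Walk u v) :
    (p.map f).internalSupport = p.internalSupport.map f := by
  simp only [internalSupport, support_map, ← List.map_tail, List.map_dropLast]

lemma IsCycle.mem_edges_of_adj_of_girth_eq_length {u v w : V} {p : G.Walk u u}
    (hp : p.IsCycle) (hgirth : G.girth = p.length) (hv : v ∈ p.support) (hw : w ∈ p.support)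
    (hvw : G.Adj v w) : s(v, w) ∈ p.edges := by
  classical
  rw [← (p.rotate_edges v hv).perm.mem_iff]
  rw [← p.mem_support_rotate_iff v hv] at hw
  rw [← p.length_rotate v hv] at hgirth
  replace hp := hp.rotate hv
  generalize p.rotate v hv = q at hp hgirth hw
  obtain ⟨t, d, rfl⟩ := mem_support_iff_exists_append.mp hw
  have ht : ¬ t.Nil := not_nil_of_ne hvw.ne
  by_contra hchord
  rw [edges_append, List.mem_append, not_or] at hchord
  have hcyc : (cons hvw d).IsCycle :=
    (cons_isCycle_iff d hvw).mpr ⟨hp.isPath_of_append_right ht, hchord.2⟩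
  have hlen : t.length = 1 := by
    have := girth_le_length hcyc
    have := t.not_nil_iff_lt_length.mp ht
    simp only [length_cons, length_append] at *
    omega
  have hsnd : t.snd = w := t.getVert_of_length_le hlen.le
  have hedge := t.mk_start_snd_mem_edges ht
  rw [hsnd] at hedge
  exact hchord.1 hedge

end Walk

structure TopMinorModel (H : SimpleGraph V) (G : SimpleGraph W) where
  φ : V → W
  σ : ∀ ⦃x y : V⦄, H.Adj x y → G.Walk (φ x) (φ y)
  injective : Function.Injective φ
  isPath : ∀ ⦃x y⦄ (h : H.Adj x y), (σ h).IsPath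
  symm : ∀ ⦃x y⦄ (h : H.Adj x y), σ h.symm = (σ h).reverse
  disjoint : ∀ ⦃x y x' y'⦄ (h : H.Adj x y) (h' : H.Adj x' y'),
    s(x, y) ≠ s(x', y') → ∀ w ∈ (σ h).internalSupport, w ∉ (σ h').support

lemma IsTopMinor.nonempty_topMinorModel {H : SimpleGraph V} {G : SimpleGraph W}
    (h : H.IsTopMinor G) : Nonempty (H.TopMinorModel G) :=
  let ⟨φ, σ, hinj, hpath, hsymm, hdisj⟩ := h
  ⟨⟨φ, σ, hinj, hpath, hsymm, hdisj⟩⟩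

namespace TopMinorModel

variable {H : SimpleGraph V} {G : SimpleGraph W} (M : H.TopMinorModel G)

lemma eq_or_eq_of_mem_support {x y x' y' : V} (h : H.Adj x y) (h' : H.Adj x' y')
    (hne : s(x, y) ≠ s(x', y')) {z : W} (hz : z ∈ (M.σ h).support)
    (hz' : z ∈ (M.σ h').support) : z = M.φ x ∨ z = M.φ y := by
  by_contra! hends
  exact M.disjoint h h' hne z ((Walk.mem_internalSupport_iff (M.isPath h)).mpr
    ⟨hz, hends.1, hends.2⟩) hz'

lemma snd_injective {x y₁ y₂ : V} (h₁ : H.Adj x y₁) (h₂ : H.Adj x y₂)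
    (hsnd : (M.σ h₁).snd = (M.σ h₂).snd) : y₁ = y₂ := by
  by_contra hne
  have hedge : s(x, y₁) ≠ s(x, y₂) := mt Sym2.congr_right.mp hne
  have hnil : ¬ (M.σ h₁).Nil := Walk.not_nil_of_ne (M.injective.ne h₁.ne)
  have hx : (M.σ h₁).snd ≠ M.φ x := ((M.σ h₁).adj_snd hnil).ne'
  have hz₂ : (M.σ h₁).snd ∈ (M.σ h₂).support := hsnd ▸ (M.σ h₂).getVert_mem_support 1
  have hz₁ := (M.σ h₁).getVert_mem_support 1
  obtain h | h := M.eq_or_eq_of_mem_support h₁ h₂ hedge hz₁ hz₂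
  · exact hx h
  obtain h' | h' := M.eq_or_eq_of_mem_support h₂ h₁ hedge.symm hz₂ hz₁
  · exact hx h'
  · exact hne (M.injective (h.symm.trans h'))

lemma card_neighborSet_le (x : V) [Finite (G.neighborSet (M.φ x))] :
    Nat.card (H.neighborSet x) ≤ Nat.card (G.neighborSet (M.φ x)) :=
  Nat.card_le_card_of_injective
    (fun y => ⟨(M.σ y.2).snd, (M.σ y.2).adj_snd (Walk.not_nil_of_ne (M.injective.ne y.2.ne))⟩)
    (fun y₁ y₂ h => Subtype.ext (M.snd_injective y₁.2 y₂.2 (congrArg Subtype.val h)))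

lemma exists_ne_isPath_of_triangle {x y z : V} (hxy : H.Adj x y) (hyz : H.Adj y z)
    (hxz : H.Adj x z) : ∃ p q : G.Walk (M.φ x) (M.φ z), p.IsPath ∧ q.IsPath ∧ p ≠ q := by
  have hxy_yz : s(x, y) ≠ s(y, z) := by simp [hxy.ne, hxz.ne]
  have hxz_xy : s(x, z) ≠ s(x, y) := mt Sym2.congr_right.mp hyz.ne'
  refine ⟨M.σ hxz, (M.σ hxy).append (M.σ hyz), M.isPath hxz, ?_, ?_⟩
  · rw [Walk.isPath_def, Walk.support_append]
    refine (M.isPath hxy).support_nodup.append (M.isPath hyz).support_nodup.tail ?_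
    intro w hw₁ hw₂
    have hwy : w ≠ M.φ y := by
      rintro rfl
      have hnd := (M.isPath hyz).support_nodup
      rw [← Walk.cons_tail_support] at hnd
      exact (List.nodup_cons.mp hnd).1 hw₂
    have hw₂' := List.mem_of_mem_tail hw₂
    have hwx := (M.eq_or_eq_of_mem_support hxy hyz hxy_yz hw₁ hw₂').resolve_right hwy
    have hwz := (M.eq_or_eq_of_mem_support hyz hxy hxy_yz.symm hw₂' hw₁).resolve_left hwy
    exact hxz.ne (M.injective (hwx.symm.trans hwz))
  · intro h
    have hy : M.φ y ∈ (M.σ hxz).support := by simp [h]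
    rcases M.eq_or_eq_of_mem_support hxz hxy hxz_xy hy (M.σ hxy).end_mem_support with h | h
    · exact hxy.ne (M.injective h).symm
    · exact hyz.ne (M.injective h)

end TopMinorModel

lemma IsTopMinor.trans_embedding {U : Type*} {P : SimpleGraph U} {H : SimpleGraph V}
    {G : SimpleGraph W} (h : P.IsTopMinor H) (f : H ↪g G) : P.IsTopMinor G := by
  obtain ⟨φ, σ, hinj, hpath, hsymm, hdisj⟩ := h
  refine ⟨f ∘ φ, fun x y h => (σ h).map f.toHom, f.injective.comp hinj,
    fun x y h => (hpath h).map f.injective, ?_, ?_⟩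
  · intro x y h
    simp only [hsymm h, Walk.reverse_map]
  · intro x y x' y' h h' hne w hw
    rw [Walk.internalSupport_map, List.mem_map] at hw
    obtain ⟨z, hz, rfl⟩ := hw
    rw [Walk.support_map, List.mem_map]
    rintro ⟨z', hz', hzz⟩
    exact hdisj h h' hne z hz (f.injective hzz ▸ hz')

section EdgeSubdivision

variable {H : SimpleGraph V} {G : SimpleGraph W} {f : V → W} {x₀ y₀ : V}
  (hadj : ∀ ⦃x y⦄, H.Adj x y → s(x, y) ≠ s(x₀, y₀) → G.Adj (f x) (f y))
  (r : G.Walk (f x₀) (f y₀))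

open Classical in
noncomputable def subdivisionWalk ⦃x y : V⦄ (h : H.Adj x y) : G.Walk (f x) (f y) :=
  if hxy : x = x₀ ∧ y = y₀ then r.copy (by rw [hxy.1]) (by rw [hxy.2])
  else if hyx : x = y₀ ∧ y = x₀ then r.reverse.copy (by rw [hyx.1]) (by rw [hyx.2])
  else (hadj h (by rw [Ne, Sym2.eq_iff]; tauto)).toWalk

lemma subdivisionWalk_symm ⦃x y : V⦄ (h : H.Adj x y) :
    subdivisionWalk hadj r h.symm = (subdivisionWalk hadj r h).reverse := by
  by_cases hxy : x = x₀ ∧ y = y₀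
  · obtain ⟨rfl, rfl⟩ := hxy
    simp [subdivisionWalk, h.ne']
  by_cases hyx : x = y₀ ∧ y = x₀
  · obtain ⟨rfl, rfl⟩ := hyx
    simp [subdivisionWalk, h.ne']
  · simp only [subdivisionWalk, dif_neg hxy, dif_neg hyx, dif_neg (mt And.symm hxy),
      dif_neg (mt And.symm hyx)]
    rfl

variable {r} in
lemma subdivisionWalk_cases (hr : r.IsPath) ⦃x y : V⦄ (h : H.Adj x y) :
    (s(x, y) = s(x₀, y₀) ∧ (subdivisionWalk hadj r h).IsPath ∧
        ∀ z ∈ (subdivisionWalk hadj r h).internalSupport, z ∈ r.internalSupport) ∨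
      ∃ h' : G.Adj (f x) (f y), subdivisionWalk hadj r h = h'.toWalk := by
  by_cases hxy : x = x₀ ∧ y = y₀
  · obtain ⟨rfl, rfl⟩ := hxy
    left
    simp [subdivisionWalk, hr]
  by_cases hyx : x = y₀ ∧ y = x₀
  · obtain ⟨rfl, rfl⟩ := hyx
    left
    simp only [subdivisionWalk, dif_neg hxy, true_and, dif_pos, Walk.copy_rfl_rfl, hr.reverse]
    exact ⟨Sym2.eq_swap, fun z => Walk.mem_internalSupport_reverse.mp⟩
  · right
    exact ⟨hadj h (by rw [Ne, Sym2.eq_iff]; tauto),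
      by simp only [subdivisionWalk, dif_neg hxy, dif_neg hyx]⟩

end EdgeSubdivision

theorem isTopMinor_of_edge_subdivision {H : SimpleGraph V} {G : SimpleGraph W} {f : V → W}
    (hf : Function.Injective f) {x₀ y₀ : V}
    (hadj : ∀ ⦃x y⦄, H.Adj x y → s(x, y) ≠ s(x₀, y₀) → G.Adj (f x) (f y))
    {r : G.Walk (f x₀) (f y₀)} (hr : r.IsPath)
    (hrf : ∀ z ∈ r.internalSupport, z ∉ Set.range f) : H.IsTopMinor G := by
  have hcases := subdivisionWalk_cases hadj hr
  refine ⟨f, subdivisionWalk hadj r, hf, ?_, subdivisionWalk_symm hadj r, ?_⟩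
  · intro x y h
    rcases hcases h with ⟨-, hp, -⟩ | ⟨h', he⟩
    · exact hp
    · exact he ▸ h'.isPath_toWalk
  · intro x y x' y' h h' hne z hz
    rcases hcases h with ⟨he, -, hint⟩ | ⟨_, he⟩
    · rcases hcases h' with ⟨he', -⟩ | ⟨_, he'⟩
      · exact absurd (he.trans he'.symm) hne
      · rw [he']
        simp only [Walk.support_cons, Walk.support_nil, List.mem_cons, List.not_mem_nil, or_false]
        rintro (hz' | hz') <;> exact hrf z (hint z hz) ⟨_, hz'.symm⟩
    · rw [he] at hz
      simp [Walk.internalSupport] at hz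

namespace ConnectedComponent

variable {G : SimpleGraph V} (c : G.ConnectedComponent)

lemma mem_supp_of_mem_support {u v : V} (hu : u ∈ c.supp) (p : G.Walk u v) :
    ∀ x ∈ p.support, x ∈ c.supp := by
  intro x hx
  obtain ⟨q, -, -⟩ := Walk.mem_support_iff_exists_append.mp hx
  rw [mem_supp_iff] at hu ⊢
  exact (ConnectedComponent.sound q.reachable).symm.trans hu

lemma card_neighborSet_induce_supp {v : V} (hv : v ∈ c.supp) :
    Nat.card ((G.induce c.supp).neighborSet ⟨v, hv⟩) = Nat.card (G.neighborSet v) :=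
  Nat.card_congr
    { toFun := fun w => ⟨w.1.1, w.2⟩
      invFun := fun w => ⟨⟨w.1, c.mem_supp_of_adj_mem_supp hv w.2⟩, w.2⟩
      left_inv := fun _ => rfl
      right_inv := fun _ => rfl }

lemma eq_of_isPath_of_isAcyclic_induce (hc : (G.induce c.supp).IsAcyclic) {u v : V}
    (hu : u ∈ c.supp) {p q : G.Walk u v} (hp : p.IsPath) (hq : q.IsPath) : p = q := by
  have hps := c.mem_supp_of_mem_support hu p
  have hqs := c.mem_supp_of_mem_support hu q
  have hp' : (p.induce c.supp hps).IsPath := .of_map (f := (Embedding.induce c.supp).toHom)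
    (by rwa [Walk.map_induce])
  have hq' : (q.induce c.supp hqs).IsPath := .of_map (f := (Embedding.induce c.supp).toHom)
    (by rwa [Walk.map_induce])
  have := (hc.subsingleton_path _ _).elim ⟨_, hp'⟩ ⟨_, hq'⟩
  rw [← p.map_induce hps, ← q.map_induce hqs]
  exact congrArg (fun r => Walk.map _ r.1) this

end ConnectedComponent

end SimpleGraph

lemma pawGraph_card_neighborSet_two : Nat.card (pawGraph.neighborSet 2) = 3 := by
  have : pawGraph.neighborSet 2 = {0, 1, 3} := by
    ext x
    fin_cases x <;> simp [pawGraph]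
  rw [this, Nat.card_coe_set_eq]
  simp [Set.ncard_insert_of_notMem]

section

variable {W : Type*} {G : SimpleGraph W}

/-- The triangle `a b v` with the edge `b v` subdivided along `r`, and the pendant edge `v w`. -/
lemma pawGraph_isTopMinor_of_isPath {a b v w : W} (hva : G.Adj v a) (hab : G.Adj a b)
    (hvw : G.Adj v w) {r : G.Walk b v} (hr : r.IsPath) (hbv : b ≠ v) (ha : a ∉ r.support)
    (hw : w ∉ r.support) (haw : a ≠ w) : pawGraph.IsTopMinor G := by
  have hbw : b ≠ w := fun h => hw (h ▸ r.start_mem_support)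
  refine isTopMinor_of_edge_subdivision (f := ![a, b, v, w]) (x₀ := 1) (y₀ := 2) ?_ ?_ hr ?_
  · intro i j
    fin_cases i <;> fin_cases j <;>
      simp [hab.ne, hab.ne', hva.ne, hva.ne', hvw.ne, hvw.ne', hbv, hbv.symm, haw, haw.symm, hbw,
        hbw.symm]
  · intro i j hij hne
    fin_cases i <;> fin_cases j <;> simp_all [pawGraph, hva.symm, hab.symm, hvw.symm]
  · intro z hz
    obtain ⟨hzr, hzb, hzv⟩ := (Walk.mem_internalSupport_iff hr).mp hz
    simp only [Matrix.range_cons, Matrix.range_empty, Set.union_empty, Set.singleton_union,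
      Set.mem_insert_iff, Set.mem_singleton_iff, not_or]
    exact ⟨fun h => ha (h ▸ hzr), hzb, hzv, fun h => hw (h ▸ hzr)⟩

lemma pawGraph_isTopMinor_of_isCycle_of_adj {v w : W} {p : G.Walk v v} (hp : p.IsCycle)
    (hvw : G.Adj v w) (hw : w ∉ p.support) : pawGraph.IsTopMinor G := by
  cases p with
  | nil => exact absurd hp Walk.not_isCycle_nil
  | @cons _ a _ hva q =>
    cases q with
    | nil => exact (hva.ne rfl).elim
    | @cons _ b _ hab r =>
      rw [Walk.cons_isCycle_iff, Walk.cons_isPath_iff] at hp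
      obtain ⟨⟨hr, ha⟩, hchord⟩ := hp
      have hbv : b ≠ v := by
        rintro rfl
        rw [Walk.isPath_iff_nil, ← Walk.eq_nil_iff_nil] at hr
        subst hr
        simp [Sym2.eq_swap] at hchord
      simp only [Walk.support_cons, List.mem_cons, not_or] at hw
      exact pawGraph_isTopMinor_of_isPath hva hab hvw hr hbv ha hw.2.2 (Ne.symm hw.2.1)

lemma SimpleGraph.Connected.isCycleGraph_of_not_isAcyclic_of_not_pawGraph_isTopMinor
    (hconn : G.Connected) (hcyc : ¬ G.IsAcyclic) (hpaw : ¬ pawGraph.IsTopMinor G) :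
    G.IsCycleGraph := by
  classical
  obtain ⟨u, p, hp, hgirth⟩ := exists_girth_eq_length.mpr hcyc
  have hclosed : ∀ v ∈ p.support, ∀ w, G.Adj v w → w ∈ p.support := by
    intro v hv w hvw
    by_contra hw
    exact hpaw (pawGraph_isTopMinor_of_isCycle_of_adj (hp.rotate hv) hvw
      (by rwa [Walk.mem_support_rotate_iff]))
  have hall : ∀ v, v ∈ p.support := by
    intro v
    by_contra hv
    obtain ⟨d, -, hd₁, hd₂⟩ :=
      (hconn u v).some.exists_boundary_dart {x | x ∈ p.support} p.start_mem_support hv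
    exact hd₂ (hclosed _ hd₁ _ d.adj)
  refine ⟨hconn, fun v => ?_⟩
  have hnbr : G.neighborSet v = p.toSubgraph.neighborSet v := by
    ext w
    simp only [mem_neighborSet, Subgraph.mem_neighborSet, Walk.adj_toSubgraph_iff_mem_edges]
    exact ⟨hp.mem_edges_of_adj_of_girth_eq_length hgirth (hall v) (hall w), p.adj_of_mem_edges⟩
  rw [hnbr, Nat.card_coe_set_eq, hp.ncard_neighborSet_toSubgraph_eq_two (hall v)]

end

theorem statement_13_general {V : Type} (G : SimpleGraph V) :
    ¬ pawGraph.IsTopMinor G ↔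
      ∀ c : G.ConnectedComponent,
        (G.induce c.supp).IsCycleGraph ∨ (G.induce c.supp).IsTree := by
  constructor
  · intro hpaw c
    have hconn : (G.induce c.supp).Connected := c.connected_toSimpleGraph
    by_contra! ⟨hcyc, htree⟩
    exact hcyc (hconn.isCycleGraph_of_not_isAcyclic_of_not_pawGraph_isTopMinor
      (fun h => htree ⟨hconn, h⟩) (fun h => hpaw (h.trans_embedding (Embedding.induce c.supp))))
  · rintro hcomp hpaw
    obtain ⟨M⟩ := hpaw.nonempty_topMinorModel
    set c := G.connectedComponentMk (M.φ 2)
    have hc : M.φ 2 ∈ c.supp := rfl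
    rcases hcomp c with ⟨-, hdeg⟩ | ⟨-, hacyc⟩
    · have hdeg2 : Nat.card (G.neighborSet (M.φ 2)) = 2 :=
        c.card_neighborSet_induce_supp hc ▸ hdeg ⟨_, hc⟩
      have : Finite (G.neighborSet (M.φ 2)) := Nat.finite_of_card_ne_zero (by omega)
      have := M.card_neighborSet_le 2
      rw [pawGraph_card_neighborSet_two, hdeg2] at this
      omega
    · obtain ⟨p, q, hp, hq, hne⟩ := M.exists_ne_isPath_of_triangle (x := 2) (y := 0) (z := 1)
        (by simp [pawGraph]) (by simp [pawGraph]) (by simp [pawGraph])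
      exact hne (c.eq_of_isPath_of_isAcyclic_induce hacyc hc hp hq)

/-- `G` does not contain the paw as a topological minor iff every connected component of `G`
is either a cycle or a tree. -/
theorem statement_13 {V : Type} [Fintype V] (G : SimpleGraph V) :
    ¬ pawGraph.IsTopMinor G ↔
      ∀ c : G.ConnectedComponent,
        (G.induce c.supp).IsCycleGraph ∨ (G.induce c.supp).IsTree :=
  statement_13_general G
end

section
/- If G is a connected finite simple graph that contains at least one cycle and does not contain the paw as a topological minor, then G is a cycle (i.e., G is connected and 2-regular). -/
open SimpleGraph

/-! Take a cycle `C` of minimal length. If a vertex `u` of `C` had a neighbour `x` other than its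
two neighbours along `C`, then either `x` lies on `C` and the chord `ux` closes a shorter cycle, or
`x` lies off `C` and `C` together with the edge `ux` is a subdivided paw. So the vertices of `C` are
closed under adjacency; by connectivity they are all of `G`, and each has exactly its two
neighbours along `C`. -/

namespace SimpleGraph.Walk

variable {V : Type*} {G : SimpleGraph V}

lemma IsPath.ne_of_mem_internalSupport {u v z : V} {p : G.Walk u v} (hp : p.IsPath)
    (hz : z ∈ p.internalSupport) : z ≠ u ∧ z ≠ v := by
  have hnd := hp.support_nodup
  have hzt : z ∈ p.support.tail := List.dropLast_subset _ hz
  refine ⟨?_, ?_⟩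
  · rintro rfl
    rw [← p.cons_tail_support, List.nodup_cons] at hnd
    exact hnd.1 hzt
  · rintro rfl
    rw [← p.dropLast_support_concat, List.nodup_append] at hnd
    have : z ∈ p.support.dropLast := by
      rw [internalSupport, ← List.tail_dropLast] at hz
      exact List.mem_of_mem_tail hz
    exact hnd.2.2 z this z (by simp) rfl

lemma mem_support_of_mem_internalSupport {u v z : V} {p : G.Walk u v}
    (hz : z ∈ p.internalSupport) : z ∈ p.support :=
  List.mem_of_mem_tail (List.dropLast_subset _ hz)

lemma internalSupport_toWalk {u v : V} (h : G.Adj u v) : h.toWalk.internalSupport = [] := rfl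

end SimpleGraph.Walk

namespace SimpleGraph

section Subdivision

variable {V W : Type*} [DecidableEq V] {H : SimpleGraph V} {G : SimpleGraph W}
  {φ : V → W} {p q : V}

def subdivisionPaths (hadj : ∀ ⦃x y⦄, H.Adj x y → s(x, y) ≠ s(p, q) → G.Adj (φ x) (φ y))
    (r : G.Walk (φ p) (φ q)) ⦃x y : V⦄ (h : H.Adj x y) : G.Walk (φ x) (φ y) :=
  if hpq : x = p ∧ y = q then r.copy (by rw [hpq.1]) (by rw [hpq.2])
  else if hqp : x = q ∧ y = p then r.reverse.copy (by rw [hqp.1]) (by rw [hqp.2])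
  else (hadj h (by rw [Ne, Sym2.eq_iff]; tauto)).toWalk

section

variable (hadj : ∀ ⦃x y⦄, H.Adj x y → s(x, y) ≠ s(p, q) → G.Adj (φ x) (φ y))
  (r : G.Walk (φ p) (φ q))

lemma subdivisionPaths_self (h : H.Adj p q) : subdivisionPaths hadj r h = r := by
  simp [subdivisionPaths]

lemma subdivisionPaths_self_symm (h : H.Adj q p) : subdivisionPaths hadj r h = r.reverse := by
  have hqp : q ≠ p := h.ne
  simp [subdivisionPaths, hqp]

lemma subdivisionPaths_of_ne {x y : V} (h : H.Adj x y) (hne : s(x, y) ≠ s(p, q)) :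
    subdivisionPaths hadj r h = (hadj h hne).toWalk := by
  rw [Ne, Sym2.eq_iff, not_or] at hne
  simp [subdivisionPaths, hne.1, hne.2]

end

lemma isTopMinor_of_subdivisionPaths (hφ : Function.Injective φ)
    (hadj : ∀ ⦃x y⦄, H.Adj x y → s(x, y) ≠ s(p, q) → G.Adj (φ x) (φ y))
    (r : G.Walk (φ p) (φ q)) (hr : r.IsPath)
    (havoid : ∀ i, i ≠ p → i ≠ q → φ i ∉ r.support) : H.IsTopMinor G := by
  have edge_cases : ∀ x y, s(x, y) ≠ s(p, q) ∨ (x = p ∧ y = q) ∨ (x = q ∧ y = p) := by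
    intro x y
    rw [Ne, Sym2.eq_iff]
    tauto
  refine ⟨φ, subdivisionPaths hadj r, hφ, ?_, ?_, ?_⟩
  · intro x y h
    rcases edge_cases x y with hne | ⟨rfl, rfl⟩ | ⟨rfl, rfl⟩
    · rw [subdivisionPaths_of_ne hadj r h hne]
      exact (hadj h hne).isPath_toWalk
    · rwa [subdivisionPaths_self]
    · rw [subdivisionPaths_self_symm]
      exact hr.reverse
  · intro x y h
    rcases edge_cases x y with hne | ⟨rfl, rfl⟩ | ⟨rfl, rfl⟩
    · have hne' : s(y, x) ≠ s(p, q) := by rwa [Sym2.eq_swap]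
      rw [subdivisionPaths_of_ne hadj r h hne, subdivisionPaths_of_ne hadj r h.symm hne']
      rfl
    · rw [subdivisionPaths_self, subdivisionPaths_self_symm]
    · rw [subdivisionPaths_self, subdivisionPaths_self_symm, Walk.reverse_reverse]
  · intro x y x' y' h h' hne z hz
    have hspecial : s(x, y) = s(p, q) ∧ z ∈ r.support ∧ z ≠ φ p ∧ z ≠ φ q := by
      rcases edge_cases x y with hne | ⟨rfl, rfl⟩ | ⟨rfl, rfl⟩
      · rw [subdivisionPaths_of_ne hadj r h hne, Walk.internalSupport_toWalk] at hz
        exact absurd hz List.not_mem_nil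
      · rw [subdivisionPaths_self] at hz
        exact ⟨rfl, Walk.mem_support_of_mem_internalSupport hz, hr.ne_of_mem_internalSupport hz⟩
      · rw [subdivisionPaths_self_symm] at hz
        have hzr := Walk.mem_support_of_mem_internalSupport hz
        rw [Walk.support_reverse, List.mem_reverse] at hzr
        exact ⟨Sym2.eq_swap, hzr, (hr.reverse.ne_of_mem_internalSupport hz).symm⟩
    obtain ⟨hxy, hzr, hzp, hzq⟩ := hspecial
    have hz_ne : ∀ i, z ≠ φ i := by
      rintro i rfl
      by_cases hip : i = p
      · exact hzp (hip ▸ rfl)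
      by_cases hiq : i = q
      · exact hzq (hiq ▸ rfl)
      exact havoid i hip hiq hzr
    rw [subdivisionPaths_of_ne hadj r h' (hxy ▸ hne.symm)]
    simp [Adj.toWalk, hz_ne]

end Subdivision

section Paw

variable {V : Type*} {G : SimpleGraph V}

lemma pawGraph_isTopMinor_of_isPath {a b u x : V} (r : G.Walk a b) (hr : r.IsPath) (hab : a ≠ b)
    (hau : G.Adj a u) (hbu : G.Adj b u) (hux : G.Adj u x) (hu : u ∉ r.support)
    (hx : x ∉ r.support) : pawGraph.IsTopMinor G := by
  have hxa : x ≠ a := fun h => hx (h ▸ r.start_mem_support)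
  have hxb : x ≠ b := fun h => hx (h ▸ r.end_mem_support)
  refine isTopMinor_of_subdivisionPaths (φ := ![a, b, u, x]) (p := 0) (q := 1)
    ?_ ?_ r hr ?_
  · intro i j hij
    fin_cases i <;> fin_cases j <;> simp_all [hau.ne, hbu.ne, hux.ne, hab.symm]
  · intro i j hij hne
    fin_cases i <;> fin_cases j <;> simp_all [pawGraph, adj_comm]
  · intro i h0 h1
    fin_cases i <;> simp_all

end Paw

end SimpleGraph

namespace SimpleGraph.Walk

variable {V : Type*} {G : SimpleGraph V} {u x : V}

lemma IsCycle.pawGraph_isTopMinor {c : G.Walk u u} (hc : c.IsCycle) (hux : G.Adj u x)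
    (hx : x ∉ c.support) : pawGraph.IsTopMinor G := by
  cases c with
  | nil => exact absurd hc not_isCycle_nil
  | @cons _ a _ hua q =>
    have hq : q.IsPath := ((cons_isCycle_iff q hua).mp hc).1
    have hqnil : ¬ q.Nil := not_nil_of_isCycle_cons hc
    have hsupp : q.dropLast.support ++ [u] = q.support := support_dropLast_concat hqnil
    have hu : u ∉ q.dropLast.support := by
      have hnd := hq.support_nodup
      rw [← hsupp, List.nodup_append] at hnd
      exact fun hmem => hnd.2.2 u hmem u (by simp) rfl
    have hab : a ≠ q.penultimate := by
      simpa [penultimate_cons_of_not_nil _ _ hqnil] using hc.snd_ne_penultimate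
    refine pawGraph_isTopMinor_of_isPath q.dropLast hq.dropLast hab hua.symm
      (q.adj_penultimate hqnil) hux hu fun hmem => hx ?_
    rw [support_cons, ← hsupp]
    exact List.mem_cons_of_mem _ (List.mem_append_left _ hmem)

lemma IsCycle.exists_isCycle_length_lt_of_chord {c : G.Walk u u} (hc : c.IsCycle)
    (hux : G.Adj u x) (hx : x ∈ c.support) (hchord : s(u, x) ∉ c.edges) :
    ∃ c' : G.Walk u u, c'.IsCycle ∧ c'.length < c.length := by
  classical
  cases c with
  | nil => exact absurd hc not_isCycle_nil
  | @cons _ a _ hua q =>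
    have hq : q.IsPath := ((cons_isCycle_iff q hua).mp hc).1
    have hxq : x ∈ q.support := by
      simpa [hux.ne'] using hx
    have hxa : x ≠ a := by
      rintro rfl
      exact hchord (by simp)
    refine ⟨cons hux (q.dropUntil x hxq), ?_, ?_⟩
    · rw [cons_isCycle_iff]
      refine ⟨hq.dropUntil hxq, fun hmem => hchord ?_⟩
      exact List.mem_cons_of_mem _ (q.edges_dropUntil_subset_edges hxq hmem)
    · simpa using length_dropUntil_lt_length hxq hxa

lemma IsCycle.toSubgraph_adj_of_length_eq_girth (hpaw : ¬ pawGraph.IsTopMinor G)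
    {v : V} {c : G.Walk v v} (hc : c.IsCycle) (hgirth : G.girth = c.length)
    (hu : u ∈ c.support) (hux : G.Adj u x) : c.toSubgraph.Adj u x := by
  classical
  have hc' : (c.rotate u hu).IsCycle := hc.rotate hu
  rw [← toSubgraph_rotate c hu, adj_toSubgraph_iff_mem_edges]
  by_contra hchord
  by_cases hx : x ∈ (c.rotate u hu).support
  · obtain ⟨d, hd, hlt⟩ := hc'.exists_isCycle_length_lt_of_chord hux hx hchord
    have := G.girth_le_length hd
    rw [length_rotate] at hlt
    omega
  · exact hpaw (hc'.pawGraph_isTopMinor hux hx)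

end SimpleGraph.Walk

theorem statement_14_general {V : Type} (G : SimpleGraph V)
    (hconn : G.Connected) (hcyc : ¬ G.IsAcyclic) (hpaw : ¬ pawGraph.IsTopMinor G) :
    G.IsCycleGraph := by
  obtain ⟨v, c, hc, hgirth⟩ := exists_girth_eq_length.mpr hcyc
  have hclosed : ∀ u ∈ c.toSubgraph.verts, ∀ x, G.Adj u x → c.toSubgraph.Adj u x :=
    fun _ hu _ hux =>
      hc.toSubgraph_adj_of_length_eq_girth hpaw hgirth (c.mem_verts_toSubgraph.mp hu) hux
  refine ⟨hconn, fun u => ?_⟩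
  have hu : u ∈ c.toSubgraph.verts :=
    (hconn v u).mem_subgraphVerts hclosed c.start_mem_verts_toSubgraph
  have hnbr : G.neighborSet u = c.toSubgraph.neighborSet u :=
    Set.ext fun x => ⟨hclosed u hu x, c.toSubgraph.adj_sub⟩
  rw [hnbr, Nat.card_coe_set_eq]
  exact hc.ncard_neighborSet_toSubgraph_eq_two (c.mem_verts_toSubgraph.mp hu)

/-- A connected finite simple graph that contains at least one cycle and has no paw
topological minor is a cycle. -/
theorem statement_14 {V : Type} [Fintype V] (G : SimpleGraph V)
    (hconn : G.Connected) (hcyc : ¬ G.IsAcyclic) (hpaw : ¬ pawGraph.IsTopMinor G) :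
    G.IsCycleGraph :=
  statement_14_general G hconn hcyc hpaw
end

section
/- For every finite simple graph G, G does not contain the chair as a topological minor if and only if every connected component of G with at least five vertices is a path, a cycle, or a star. -/
open SimpleGraph

/-- The chair: a path `0 - 1 - 2 - 3` together with a pendant vertex `4` adjacent to the
second vertex `1` of the path. -/
def chairGraph : SimpleGraph (Fin 5) :=
  SimpleGraph.fromRel (fun i j =>
    (i = 0 ∧ j = 1) ∨ (i = 1 ∧ j = 2) ∨ (i = 2 ∧ j = 3) ∨ (i = 1 ∧ j = 4))

/-- A graph is a star if some vertex (the center) is adjacent to all other vertices and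
there are no other edges. -/
def SimpleGraph.IsStarGraph {V : Type*} (G : SimpleGraph V) : Prop :=
  ∃ c : V, (∀ v, v ≠ c → G.Adj c v) ∧ ∀ u v, G.Adj u v → u = c ∨ v = c

/-- A graph is a path if it is a tree with maximum degree at most `2`. -/
def SimpleGraph.IsPathGraph {V : Type*} (G : SimpleGraph V) : Prop :=
  G.IsTree ∧ ∀ v, Nat.card (G.neighborSet v) ≤ 2

/-!
A topological minor model of the chair yields a chair subgraph: the branch paths from the image
of the degree-three vertex `1` towards `0`, towards `4`, and through `2` towards `3` are internally
disjoint, so the first edges of the first two together with the first two edges of the third form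
a chair. Hence it suffices to classify the connected graphs on at least five vertices without a
chair subgraph. With maximum degree at most two such a graph is a path if it is acyclic, and
otherwise the vertex set of a cycle is closed under adjacency, so the graph is a cycle. A vertex
`v` of degree at least three forces a star: a vertex at distance two from `v` closes a chair with
two further neighbours of `v`, and so does an edge between two neighbours once there are at least
four of them.
-/

theorem Set.exists_ne_mem_sdiff_of_ncard_add_two_le {α : Type*} {s t : Set α} (hs : s.Finite)
    (ht : t.Finite) (h : t.ncard + 2 ≤ s.ncard) : ∃ p ∈ s, ∃ q ∈ s, p ≠ q ∧ p ∉ t ∧ q ∉ t := by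
  have := Set.ncard_le_ncard_sdiff_add_ncard s t ht
  obtain ⟨p, q, hp, hq, hpq⟩ := (Set.one_lt_ncard_iff (hs.sdiff (t := t))).mp (by omega)
  exact ⟨p, hp.1, q, hq.1, hpq, hp.2, hq.2⟩

namespace SimpleGraph

variable {V W : Type*} {G : SimpleGraph V}

namespace Walk

variable {u v w : V}

lemma mem_internalSupport_of_ne {p : G.Walk u v} (hw : w ∈ p.support) (hu : w ≠ u)
    (hv : w ≠ v) : w ∈ p.internalSupport := by
  rw [mem_support_iff, or_iff_right hu] at hw
  have hne : p.support.tail ≠ [] := List.ne_nil_of_mem hw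
  rw [← List.dropLast_append_getLast hne, List.getLast_tail, getLast_support, List.mem_append,
    List.mem_singleton, or_iff_left hv] at hw
  exact hw

lemma IsPath.getVert_ne_start {p : G.Walk u v} (hp : p.IsPath) {i : ℕ}
    (hi₀ : 0 < i) (hi : i ≤ p.length) : p.getVert i ≠ u := fun h => by
  have := hp.getVert_injOn (by simpa using hi) (by simp) (h.trans p.getVert_zero.symm)
  omega

lemma IsPath.append {p : G.Walk u v} {q : G.Walk v w} (hp : p.IsPath) (hq : q.IsPath)
    (hpq : ∀ x ∈ p.support, x ∈ q.support → x = v) : (p.append q).IsPath := by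
  have hv : v ∉ q.support.tail := by
    have := hq.support_nodup
    rw [← cons_tail_support] at this
    exact (List.nodup_cons.mp this).1
  rw [isPath_def, support_append, List.nodup_append]
  refine ⟨hp.support_nodup, hq.support_nodup.sublist (List.tail_sublist _), ?_⟩
  rintro x hx _ hy rfl
  exact hv (hpq x hx (List.mem_of_mem_tail hy) ▸ hy)

end Walk

lemma Reachable.mem_of_adj_closed {S : Set V} (hS : ∀ ⦃a b⦄, a ∈ S → G.Adj a b → b ∈ S)
    {u v : V} (huv : G.Reachable u v) (hu : u ∈ S) : v ∈ S := by
  obtain ⟨p⟩ := huv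
  induction p with
  | nil => exact hu
  | cons h _ ih => exact ih (hS hu h)

lemma Copy.isContained_induce_supp {A : SimpleGraph W} (hA : A.Preconnected) (f : Copy A G)
    (a : W) : A ⊑ G.induce (G.connectedComponentMk (f a)).supp := by
  have hmem : ∀ x, f x ∈ (G.connectedComponentMk (f a)).supp := fun x =>
    ConnectedComponent.sound ((hA a x).map f.toHom).symm
  exact ⟨⟨⟨fun x => ⟨f x, hmem x⟩, fun h => f.toHom.map_adj h⟩,
    fun x y h => f.injective (congrArg Subtype.val h)⟩⟩

lemma IsContained.card_le [Finite V] {A : SimpleGraph W} (h : A ⊑ G) :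
    Nat.card W ≤ Nat.card V :=
  let ⟨f⟩ := h
  Nat.card_le_card_of_injective f f.injective

theorem IsContained.isTopMinor {H : SimpleGraph W} (h : H ⊑ G) : H.IsTopMinor G := by
  obtain ⟨f⟩ := h
  refine ⟨f, fun x y hxy => (f.toHom.map_adj hxy).toWalk, f.injective,
    fun x y hxy => (f.toHom.map_adj hxy).isPath_toWalk, fun x y hxy => ?_,
    fun x y x' y' h h' _ w hw => ?_⟩
  · simp [Adj.toWalk]
  · simp [Walk.internalSupport, Adj.toWalk] at hw

lemma exists_common_endpoint_of_mem_support {H : SimpleGraph W} {φ : W → V}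
    {σ : ∀ ⦃x y⦄, H.Adj x y → G.Walk (φ x) (φ y)} (hφ : Function.Injective φ)
    (hdisj : ∀ ⦃x y x' y'⦄ (h : H.Adj x y) (h' : H.Adj x' y'), s(x, y) ≠ s(x', y') →
      ∀ w ∈ (σ h).internalSupport, w ∉ (σ h').support)
    ⦃x y x' y' : W⦄ (h : H.Adj x y) (h' : H.Adj x' y') (hne : s(x, y) ≠ s(x', y')) :
    ∀ w ∈ (σ h).support, w ∈ (σ h').support →
      ∃ t, (t = x ∨ t = y) ∧ (t = x' ∨ t = y') ∧ w = φ t := by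
  have endpoint : ∀ ⦃x y x' y'⦄ (h : H.Adj x y) (h' : H.Adj x' y'), s(x, y) ≠ s(x', y') →
      ∀ w ∈ (σ h).support, w ∈ (σ h').support → w = φ x ∨ w = φ y := by
    intro x y x' y' h h' hne w hw hw'
    by_contra! hxy
    exact hdisj h h' hne w (Walk.mem_internalSupport_of_ne hw hxy.1 hxy.2) hw'
  intro w hw hw'
  obtain ⟨a, ha, rfl⟩ : ∃ a, (a = x ∨ a = y) ∧ w = φ a := by
    rcases endpoint h h' hne w hw hw' with rfl | rfl <;> simp
  obtain ⟨b, hb, hab⟩ : ∃ b, (b = x' ∨ b = y') ∧ φ a = φ b := by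
    rcases endpoint h' h hne.symm _ hw' hw with h | h <;> exact ⟨_, by simp, h⟩
  exact ⟨a, ha, hφ hab ▸ hb, rfl⟩

lemma chairGraph_adj {i j : Fin 5} : chairGraph.Adj i j ↔
    i ≠ j ∧ ((i = 0 ∧ j = 1) ∨ (i = 1 ∧ j = 2) ∨ (i = 2 ∧ j = 3) ∨ (i = 1 ∧ j = 4) ∨
      (j = 0 ∧ i = 1) ∨ (j = 1 ∧ i = 2) ∨ (j = 2 ∧ i = 3) ∨ (j = 1 ∧ i = 4)) := by
  simp only [chairGraph, fromRel_adj, or_assoc]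

instance : DecidableRel chairGraph.Adj := fun _ _ => decidable_of_iff _ chairGraph_adj.symm

lemma chairGraph_isContained {v₀ v₁ v₂ v₃ v₄ : V} (h₀₁ : G.Adj v₀ v₁) (h₁₂ : G.Adj v₁ v₂)
    (h₂₃ : G.Adj v₂ v₃) (h₁₄ : G.Adj v₁ v₄) (h₀₂ : v₀ ≠ v₂) (h₀₃ : v₀ ≠ v₃) (h₀₄ : v₀ ≠ v₄)
    (h₁₃ : v₁ ≠ v₃) (h₂₄ : v₂ ≠ v₄) (h₃₄ : v₃ ≠ v₄) : chairGraph ⊑ G := by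
  refine ⟨⟨⟨![v₀, v₁, v₂, v₃, v₄], fun {i j} hij => ?_⟩, fun i j hij => ?_⟩⟩
  · rcases chairGraph_adj.mp hij with ⟨-, ⟨rfl, rfl⟩ | ⟨rfl, rfl⟩ | ⟨rfl, rfl⟩ | ⟨rfl, rfl⟩ |
      ⟨rfl, rfl⟩ | ⟨rfl, rfl⟩ | ⟨rfl, rfl⟩ | ⟨rfl, rfl⟩⟩ <;> simp [*, G.adj_comm]
  · have := h₀₁.ne; have := h₁₂.ne; have := h₂₃.ne; have := h₁₄.ne
    fin_cases i <;> fin_cases j <;> simp_all [eq_comm]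

lemma chairGraph_connected : chairGraph.Connected := by
  refine (connected_iff_exists_forall_reachable _).mpr ⟨1, fun i => ?_⟩
  have h₁₂ : chairGraph.Adj 1 2 := by decide
  fin_cases i
  · exact (show chairGraph.Adj 1 0 by decide).reachable
  · rfl
  · exact h₁₂.reachable
  · exact h₁₂.reachable.trans (show chairGraph.Adj 2 3 by decide).reachable
  · exact (show chairGraph.Adj 1 4 by decide).reachable

lemma chairGraph_card_neighborSet_one : Nat.card (chairGraph.neighborSet 1) = 3 := by
  rw [Nat.card_eq_fintype_card]; decide

lemma chairGraph_isContained_of_isPath {c x y z : V} {p : G.Walk c x} {q : G.Walk c y}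
    {r : G.Walk c z} (hp : p.IsPath) (hq : q.IsPath) (hp₁ : 0 < p.length)
    (hq₂ : 1 < q.length) (hr₁ : 0 < r.length)
    (hpq : ∀ w ∈ p.support, w ∈ q.support → w = c) (hpr : ∀ w ∈ p.support, w ∈ r.support → w = c)
    (hqr : ∀ w ∈ q.support, w ∈ r.support → w = c) : chairGraph ⊑ G := by
  have apart : ∀ {s t : V} {a : G.Walk c s} {b : G.Walk c t},
      (∀ w ∈ a.support, w ∈ b.support → w = c) → ∀ {i} (j), a.getVert i ≠ c →
        a.getVert i ≠ b.getVert j :=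
    fun hab i j hi h => hi (hab _ (Walk.getVert_mem_support _ i) (h ▸ Walk.getVert_mem_support _ j))
  have hp₁c := hp.getVert_ne_start one_pos hp₁
  have hq₁c := hq.getVert_ne_start one_pos hq₂.le
  have hq₂c := hq.getVert_ne_start two_pos hq₂
  have hq₁₂ : q.getVert 1 ≠ q.getVert 2 := fun h => by
    have := hq.getVert_injOn (by simp; omega) (by simp; omega) h
    omega
  refine chairGraph_isContained (v₁ := c) ?_ ?_ (q.adj_getVert_succ hq₂) ?_ (apart hpq 1 hp₁c)
    (apart hpq 2 hp₁c) (apart hpr 1 hp₁c) hq₂c.symm (apart hqr 1 hq₁c) (apart hqr 1 hq₂c)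
  · simpa using (p.adj_getVert_succ hp₁).symm
  · simpa using q.adj_getVert_succ (by omega : 0 < q.length)
  · simpa using r.adj_getVert_succ hr₁

theorem IsTopMinor.chairGraph_isContained (h : chairGraph.IsTopMinor G) : chairGraph ⊑ G := by
  obtain ⟨φ, σ, hφ, hpath, -, hdisj⟩ := h
  have common := exists_common_endpoint_of_mem_support hφ hdisj
  have h₁₀ : chairGraph.Adj 1 0 := by decide
  have h₁₂ : chairGraph.Adj 1 2 := by decide
  have h₂₃ : chairGraph.Adj 2 3 := by decide
  have h₁₄ : chairGraph.Adj 1 4 := by decide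
  have length_pos : ∀ ⦃x y⦄ (h : chairGraph.Adj x y), 0 < (σ h).length := fun x y h =>
    Nat.pos_of_ne_zero fun h0 => h.ne (hφ (Walk.length_eq_zero_iff.mp h0).eq)
  refine chairGraph_isContained_of_isPath (hpath h₁₀)
    ((hpath h₁₂).append (hpath h₂₃) fun w hw hw' => ?_) (length_pos h₁₀)
    (by rw [Walk.length_append]; have := length_pos h₁₂; have := length_pos h₂₃; omega)
    (length_pos h₁₄) (fun w hw hw' => ?_) (fun w hw hw' => ?_) (fun w hw hw' => ?_)
  · obtain ⟨t, ht, ht', rfl⟩ := common h₁₂ h₂₃ (by decide) w hw hw'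
    exact congrArg φ (by omega)
  · rcases (Walk.mem_support_append_iff _ _).mp hw' with hw' | hw'
    · obtain ⟨t, ht, ht', rfl⟩ := common h₁₀ h₁₂ (by decide) w hw hw'
      exact congrArg φ (by omega)
    · obtain ⟨t, ht, ht', rfl⟩ := common h₁₀ h₂₃ (by decide) w hw hw'
      omega
  · obtain ⟨t, ht, ht', rfl⟩ := common h₁₀ h₁₄ (by decide) w hw hw'
    exact congrArg φ (by omega)
  · rcases (Walk.mem_support_append_iff _ _).mp hw with hw | hw
    · obtain ⟨t, ht, ht', rfl⟩ := common h₁₂ h₁₄ (by decide) w hw hw'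
      exact congrArg φ (by omega)
    · obtain ⟨t, ht, ht', rfl⟩ := common h₂₃ h₁₄ (by decide) w hw hw'
      omega

theorem isTopMinor_chairGraph_iff : chairGraph.IsTopMinor G ↔ chairGraph ⊑ G :=
  ⟨IsTopMinor.chairGraph_isContained, IsContained.isTopMinor⟩

theorem chairGraph_free_of_card_neighborSet_le_two [Finite V]
    (hdeg : ∀ v, Nat.card (G.neighborSet v) ≤ 2) : chairGraph.Free G := by
  rintro ⟨f⟩
  have := Nat.card_le_card_of_injective _ (f.mapNeighborSet 1).injective
  have := hdeg (f 1)
  rw [chairGraph_card_neighborSet_one] at *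
  omega

-- the edges `01` and `23` of the chair are disjoint, but every edge of a star contains its center
theorem IsStarGraph.chairGraph_free (hG : G.IsStarGraph) : chairGraph.Free G := by
  rintro ⟨f⟩
  obtain ⟨c, -, hedge⟩ := hG
  have hc : ∀ ⦃i j⦄, chairGraph.Adj i j → f i = c ∨ f j = c := fun i j h =>
    hedge _ _ (f.toHom.map_adj h)
  have hne : ∀ i j, i ≠ j → f i ≠ f j := fun i j hij h => hij (f.injective h)
  rcases hc (show chairGraph.Adj 0 1 by decide) with h₀ | h₁ <;>
    rcases hc (show chairGraph.Adj 2 3 by decide) with h₂ | h₃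
  exacts [hne 0 2 (by decide) (h₀.trans h₂.symm), hne 0 3 (by decide) (h₀.trans h₃.symm),
    hne 1 2 (by decide) (h₁.trans h₂.symm), hne 1 3 (by decide) (h₁.trans h₃.symm)]

theorem Connected.isPathGraph_or_isCycleGraph [Finite V] (hG : G.Connected)
    (hdeg : ∀ v, Nat.card (G.neighborSet v) ≤ 2) : G.IsPathGraph ∨ G.IsCycleGraph := by
  by_cases hac : G.IsAcyclic
  · exact Or.inl ⟨⟨hG, hac⟩, hdeg⟩
  obtain ⟨u, c, hc⟩ : ∃ u, ∃ c : G.Walk u u, c.IsCycle := by simpa [IsAcyclic] using hac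
  -- a cycle through `w` already uses the at most two edges of `G` at `w`
  have hnbr : ∀ w ∈ c.support, c.toSubgraph.neighborSet w = G.neighborSet w := fun w hw =>
    Set.eq_of_subset_of_ncard_le (c.toSubgraph.neighborSet_subset w)
      (by rw [hc.ncard_neighborSet_toSubgraph_eq_two hw, ← Nat.card_coe_set_eq]; exact hdeg w)
  have hall : ∀ w, w ∈ c.support := fun w =>
    (hG.preconnected u w).mem_of_adj_closed (S := {w | w ∈ c.support})
      (fun a b ha hab => c.mem_verts_toSubgraph.mp
        (c.toSubgraph.neighborSet_subset_verts a ((hnbr a ha).symm ▸ hab)))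
      c.start_mem_support
  exact Or.inr ⟨hG, fun w => by
    rw [Nat.card_coe_set_eq, ← hnbr w (hall w), hc.ncard_neighborSet_toSubgraph_eq_two (hall w)]⟩

theorem Connected.isStarGraph_of_chairGraph_free [Finite V] (hG : G.Connected)
    (hV : 5 ≤ Nat.card V) {v : V} (hv : 2 < Nat.card (G.neighborSet v))
    (hfree : chairGraph.Free G) : G.IsStarGraph := by
  rw [Nat.card_coe_set_eq] at hv
  have hnbr : ∀ ⦃r s⦄, G.Adj v r → G.Adj r s → s ≠ v → G.Adj v s := by
    intro r s hr hs hsv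
    by_contra hvs
    obtain ⟨p, hp, q, hq, hpq, hpr, hqr⟩ := Set.exists_ne_mem_sdiff_of_ncard_add_two_le
      (G.neighborSet v).toFinite (Set.finite_singleton r) (by rw [Set.ncard_singleton]; omega)
    rw [Set.mem_singleton_iff] at hpr hqr
    exact hfree (chairGraph_isContained (G.adj_symm hp) hr hs hq hpr (fun h => hvs (h ▸ hp)) hpq
      hsv.symm (Ne.symm hqr) (fun h => hvs (h ▸ hq)))
  have hcenter : ∀ w, w ≠ v → G.Adj v w := fun w hw =>
    ((hG.preconnected v w).mem_of_adj_closed (S := {w | w = v ∨ G.Adj v w})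
      (fun a b ha hab => by
        rcases ha with rfl | ha
        · exact Or.inr hab
        · exact or_iff_not_imp_left.mpr (hnbr ha hab))
      (Or.inl rfl)).resolve_left hw
  refine ⟨v, hcenter, fun r s hrs => ?_⟩
  by_contra! hrsv
  have hsmall : ({v, r, s} : Set V).ncard ≤ 3 :=
    (Set.ncard_insert_le _ _).trans (by grw [Set.ncard_insert_le, Set.ncard_singleton])
  obtain ⟨p, -, q, -, hpq, hp, hq⟩ := Set.exists_ne_mem_sdiff_of_ncard_add_two_le Set.finite_univ
    (Set.toFinite {v, r, s}) (by rw [Set.ncard_univ]; omega)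
  simp only [Set.mem_insert_iff, Set.mem_singleton_iff, not_or] at hp hq
  exact hfree (chairGraph_isContained (hcenter p hp.1).symm (hcenter r hrsv.1) hrs
    (hcenter q hq.1) hp.2.1 hp.2.2 hpq hrsv.2.symm (Ne.symm hq.2.1) (Ne.symm hq.2.2))

end SimpleGraph

/-- `G` does not contain the chair as a topological minor iff every connected component of
`G` with at least five vertices is a path, a cycle, or a star. -/
theorem statement_15 {V : Type} [Fintype V] (G : SimpleGraph V) :
    ¬ chairGraph.IsTopMinor G ↔
      ∀ c : G.ConnectedComponent, 5 ≤ Nat.card c.supp →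
        (G.induce c.supp).IsPathGraph ∨ (G.induce c.supp).IsCycleGraph ∨
          (G.induce c.supp).IsStarGraph := by
  rw [isTopMinor_chairGraph_iff]
  constructor
  · intro hfree c hc
    have hconn : (G.induce c.supp).Connected := c.connected_toSimpleGraph
    have hfree' : chairGraph.Free (G.induce c.supp) :=
      fun h => hfree (h.trans (Copy.induce G _).isContained)
    by_cases! hdeg : ∀ v, Nat.card ((G.induce c.supp).neighborSet v) ≤ 2
    · exact (hconn.isPathGraph_or_isCycleGraph hdeg).imp_right Or.inl
    · obtain ⟨v, hv⟩ := hdeg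
      exact Or.inr (Or.inr (hconn.isStarGraph_of_chairGraph_free hc hv hfree'))
  · rintro hcomp ⟨f⟩
    have hc := f.isContained_induce_supp chairGraph_connected.preconnected 1
    rcases hcomp _ (by simpa using hc.card_le) with hpath | hcycle | hstar
    · exact chairGraph_free_of_card_neighborSet_le_two hpath.2 hc
    · exact chairGraph_free_of_card_neighborSet_le_two (fun v => (hcycle.2 v).le) hc
    · exact hstar.chairGraph_free hc
end
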